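/- arXiv:2008.11931 — 4 statements merged into one kernel-verified Lean document; each statement's English description precedes it below -/
import Mathlib

section
/- Let l_{q0}, l_q > 0 with l_q ≤ l_{q0}, let T_c ≥ max(l_q, l_{q0}) and u > 0. Let T be uniformly distributed on [−T_c, T_c] and let h(T) be the piecewise collision overlap function: h(T) = (l_{q0} − T)/l_{q0} for l_{q0} − l_q ≤ T ≤ l_{q0}; h(T) = l_q/l_{q0} for 0 ≤ T ≤ l_{q0} − l_q; h(T) = (l_q + T)/l_{q0} for −l_q ≤ T ≤ 0; h(T) = 0 otherwise. Then E[ 1 / (1 + u·h(T)) ] = 1 − (l_{q0} + l_q)/(2 T_c) + (l_{q0}/(T_c u)) · log(1 + u·l_q/l_{q0}) + (l_{q0} − l_q) / (2 T_c (1 + u·l_q/l_{q0})). -/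
/-!
The overlap `h` is a trapezoid: it vanishes outside `[-lq, l0]`, equals `lq / l0` on the
plateau `[0, l0 - lq]` and is affine with slope `± 1 / l0` on the two ramps of length `lq`.
So `1 / (1 + u h)` is `1` on a set of length `2 Tc - l0 - lq`, the constant
`1 / (1 + u lq / l0)` on the plateau, and on each ramp a translation or reflection turns its
integral into `∫₀^lq ds / (1 + u s / l0) = (l0 / u) log (1 + u lq / l0)`.
-/

open MeasureTheory Set intervalIntegral

theorem integral_inv_one_add_mul {k a : ℝ} (hk : k ≠ 0) (ha : 0 < 1 + k * a) :
    ∫ t in (0 : ℝ)..a, (1 + k * t)⁻¹ = Real.log (1 + k * a) / k := by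
  have := integral_comp_mul_add (a := 0) (b := a) (fun x : ℝ => x⁻¹) hk 1
  simp only [mul_zero, add_zero, add_comm _ (1 : ℝ)] at this
  rw [this, integral_inv_of_pos one_pos ha, div_one, smul_eq_mul, inv_mul_eq_div]

theorem integral_one_div_one_add_mul_div {l u a : ℝ} (hl : l ≠ 0) (hu : u ≠ 0)
    (ha : 0 < 1 + u * a / l) :
    ∫ s in (0 : ℝ)..a, 1 / (1 + u * (s / l)) = l / u * Real.log (1 + u * a / l) := by
  rw [show (fun s => 1 / (1 + u * (s / l))) = fun s => (1 + u / l * s)⁻¹ by ext s; ring,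
    integral_inv_one_add_mul (div_ne_zero hu hl) (by rwa [div_mul_eq_mul_div]),
    div_mul_eq_mul_div u l a]
  field_simp

theorem integral_eq_sub_mul_of_eqOn_Icc {f : ℝ → ℝ} {a b c : ℝ} (hab : a ≤ b)
    (hf : EqOn f (fun _ => c) (Icc a b)) : ∫ t in a..b, f t = (b - a) * c := by
  rw [integral_congr (uIcc_of_le hab ▸ hf), intervalIntegral.integral_const, smul_eq_mul]

noncomputable def collisionOverlap (l0 lq t : ℝ) : ℝ :=
  if l0 - lq ≤ t ∧ t ≤ l0 then (l0 - t) / l0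
  else if 0 ≤ t ∧ t ≤ l0 - lq then lq / l0
  else if -lq ≤ t ∧ t ≤ 0 then (lq + t) / l0
  else 0

section
variable {l0 lq : ℝ}

theorem collisionOverlap_eq_max_min (hlq : 0 ≤ lq) (hle : lq ≤ l0) (t : ℝ) :
    collisionOverlap l0 lq t = max 0 (min lq (min (lq + t) (l0 - t))) / l0 := by
  unfold collisionOverlap
  split_ifs <;> simp only [max_def, min_def] <;> split_ifs <;> (try simp only [zero_div]) <;>
    first | rfl | (congr 1; linarith) | (exfalso; grind)

theorem collisionOverlap_nonneg (hlq : 0 ≤ lq) (hle : lq ≤ l0) (t : ℝ) :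
    0 ≤ collisionOverlap l0 lq t := by
  rw [collisionOverlap_eq_max_min hlq hle]
  exact div_nonneg (le_max_left _ _) (hlq.trans hle)

theorem continuous_collisionOverlap (hlq : 0 ≤ lq) (hle : lq ≤ l0) :
    Continuous (collisionOverlap l0 lq) := by
  simp only [funext (collisionOverlap_eq_max_min hlq hle)]
  fun_prop

theorem collisionOverlap_eq_zero_of_le_neg (hlq : 0 ≤ lq) (hle : lq ≤ l0) {t : ℝ}
    (ht : t ≤ -lq) :
    collisionOverlap l0 lq t = 0 := by
  rw [collisionOverlap_eq_max_min hlq hle, max_eq_left, zero_div]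
  exact (min_le_right _ _).trans ((min_le_left _ _).trans (by linarith))

theorem collisionOverlap_eq_of_mem_Icc_left (hlq : 0 ≤ lq) (hle : lq ≤ l0) {t : ℝ}
    (ht : t ∈ Icc (-lq) 0) :
    collisionOverlap l0 lq t = (lq + t) / l0 := by
  rw [collisionOverlap_eq_max_min hlq hle, min_eq_left (a := lq + t) (by linarith [ht.2]),
    min_eq_right (by linarith [ht.2]), max_eq_right (by linarith [ht.1])]

theorem collisionOverlap_eq_of_mem_Icc_plateau (hlq : 0 ≤ lq) (hle : lq ≤ l0) {t : ℝ}
    (ht : t ∈ Icc 0 (l0 - lq)) :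
    collisionOverlap l0 lq t = lq / l0 := by
  rw [collisionOverlap_eq_max_min hlq hle,
    min_eq_left (le_min (by linarith [ht.1]) (by linarith [ht.2])), max_eq_right hlq]

theorem collisionOverlap_eq_of_mem_Icc_right (hlq : 0 ≤ lq) (hle : lq ≤ l0) {t : ℝ}
    (ht : t ∈ Icc (l0 - lq) l0) :
    collisionOverlap l0 lq t = (l0 - t) / l0 := by
  rw [collisionOverlap_eq_max_min hlq hle, min_eq_right (a := lq + t) (by linarith [ht.1]),
    min_eq_right (by linarith [ht.1]), max_eq_right (by linarith [ht.2])]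

theorem collisionOverlap_eq_zero_of_le (hlq : 0 ≤ lq) (hle : lq ≤ l0) {t : ℝ}
    (ht : l0 ≤ t) :
    collisionOverlap l0 lq t = 0 := by
  rw [collisionOverlap_eq_max_min hlq hle, max_eq_left, zero_div]
  exact (min_le_right _ _).trans ((min_le_right _ _).trans (by linarith))

theorem continuous_one_div_one_add_mul_collisionOverlap (hlq : 0 ≤ lq) (hle : lq ≤ l0)
    {u : ℝ} (hu : 0 ≤ u) : Continuous fun t => 1 / (1 + u * collisionOverlap l0 lq t) :=
  continuous_const.div (continuous_const.add (continuous_const.mul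
    (continuous_collisionOverlap hlq hle))) fun t =>
      (add_pos_of_pos_of_nonneg one_pos (mul_nonneg hu (collisionOverlap_nonneg hlq hle t))).ne'

theorem integral_one_div_one_add_mul_collisionOverlap_left (hl0 : 0 < l0) (hlq : 0 ≤ lq)
    (hle : lq ≤ l0) {u : ℝ} (hu : 0 < u) :
    ∫ t in (-lq)..0, 1 / (1 + u * collisionOverlap l0 lq t) =
      l0 / u * Real.log (1 + u * lq / l0) :=
  calc ∫ t in (-lq)..0, 1 / (1 + u * collisionOverlap l0 lq t)
      _ = ∫ t in (-lq)..0, 1 / (1 + u * ((t + lq) / l0)) := integral_congr fun t ht => by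
        rw [uIcc_of_le (by linarith)] at ht
        rw [collisionOverlap_eq_of_mem_Icc_left hlq hle ht, add_comm lq]
      _ = ∫ s in (0 : ℝ)..lq, 1 / (1 + u * (s / l0)) := by
        rw [integral_comp_add_right (fun s => 1 / (1 + u * (s / l0))), neg_add_cancel, zero_add]
      _ = l0 / u * Real.log (1 + u * lq / l0) :=
        integral_one_div_one_add_mul_div hl0.ne' hu.ne' (by positivity)

theorem integral_one_div_one_add_mul_collisionOverlap_right (hl0 : 0 < l0) (hlq : 0 ≤ lq)
    (hle : lq ≤ l0) {u : ℝ} (hu : 0 < u) :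
    ∫ t in (l0 - lq)..l0, 1 / (1 + u * collisionOverlap l0 lq t) =
      l0 / u * Real.log (1 + u * lq / l0) :=
  calc ∫ t in (l0 - lq)..l0, 1 / (1 + u * collisionOverlap l0 lq t)
      _ = ∫ t in (l0 - lq)..l0, 1 / (1 + u * ((l0 - t) / l0)) := integral_congr fun t ht => by
        rw [uIcc_of_le (by linarith)] at ht
        rw [collisionOverlap_eq_of_mem_Icc_right hlq hle ht]
      _ = ∫ s in (0 : ℝ)..lq, 1 / (1 + u * (s / l0)) := by
        rw [integral_comp_sub_left (fun s => 1 / (1 + u * (s / l0))), sub_self, sub_sub_cancel]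
      _ = l0 / u * Real.log (1 + u * lq / l0) :=
        integral_one_div_one_add_mul_div hl0.ne' hu.ne' (by positivity)

end

theorem stmt_3 (l0 lq Tc u : ℝ) (hl0 : 0 < l0) (hlq : 0 < lq) (hle : lq ≤ l0)
    (hTc : max lq l0 ≤ Tc) (hu : 0 < u)
    (h : ℝ → ℝ)
    (hdef : ∀ t : ℝ,
      h t = if l0 - lq ≤ t ∧ t ≤ l0 then (l0 - t) / l0
            else if 0 ≤ t ∧ t ≤ l0 - lq then lq / l0
            else if -lq ≤ t ∧ t ≤ 0 then (lq + t) / l0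
            else 0) :
    (1 / (2 * Tc)) * ∫ t in Icc (-Tc) Tc, 1 / (1 + u * h t) =
      1 - (l0 + lq) / (2 * Tc) + (l0 / (Tc * u)) * Real.log (1 + u * lq / l0)
        + (l0 - lq) / (2 * Tc * (1 + u * lq / l0)) := by
  obtain rfl : h = collisionOverlap l0 lq := funext hdef
  obtain ⟨hlqTc, hl0Tc⟩ := max_le_iff.mp hTc
  have hTc0 : 0 < Tc := hl0.trans_le hl0Tc
  have hf (a b : ℝ) :
      IntervalIntegrable (fun t => 1 / (1 + u * collisionOverlap l0 lq t)) volume a b :=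
    (continuous_one_div_one_add_mul_collisionOverlap hlq.le hle hu.le).intervalIntegrable a b
  rw [integral_Icc_eq_integral_Ioc, ← integral_of_le (by linarith),
    ← integral_add_adjacent_intervals (hf (-Tc) (-lq)) (hf (-lq) Tc),
    ← integral_add_adjacent_intervals (hf (-lq) 0) (hf 0 Tc),
    ← integral_add_adjacent_intervals (hf 0 (l0 - lq)) (hf (l0 - lq) Tc),
    ← integral_add_adjacent_intervals (hf (l0 - lq) l0) (hf l0 Tc),
    integral_one_div_one_add_mul_collisionOverlap_left hl0 hlq.le hle hu,
    integral_one_div_one_add_mul_collisionOverlap_right hl0 hlq.le hle hu,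
    integral_eq_sub_mul_of_eqOn_Icc (c := 1) (by linarith) fun t ht => by
      simp [collisionOverlap_eq_zero_of_le_neg hlq.le hle ht.2],
    integral_eq_sub_mul_of_eqOn_Icc (c := 1 / (1 + u * (lq / l0))) (by linarith) fun t ht => by
      simp only [collisionOverlap_eq_of_mem_Icc_plateau hlq.le hle ht],
    integral_eq_sub_mul_of_eqOn_Icc (c := 1) hl0Tc fun t ht => by
      simp [collisionOverlap_eq_zero_of_le hlq.le hle ht.1]]
  field_simp
  ring
end

section
/- Let l_{q0}, l_q > 0, T_c ≥ max(l_q, l_{q0}), u > 0, and let h be the normalized overlap h(T) = (1/l_{q0}) μ([T, T+l_q] ∩ [0, l_{q0}]). Then the unified formula holds: (1/(2T_c)) ∫_{−T_c}^{T_c} 1/(1 + u·h(t)) dt = 1 − (l_{q0} + l_q)/(2 T_c) + (l_{q0}/(T_c u)) log(1 + u·min(l_q, l_{q0})/l_{q0}) + |l_{q0} − l_q| / (2 T_c (1 + u·min(l_q, l_{q0})/l_{q0})). -/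
open MeasureTheory Set

noncomputable def overlap (l0 lq T : ℝ) : ℝ :=
  (volume (Icc T (T + lq) ∩ Icc 0 l0)).toReal / l0

/-!
As a function of `T`, the overlap `[T, T + lq] ∩ [0, l0]` has trapezoidal length: writing
`m = min lq l0`, it vanishes outside `[-lq, l0]`, grows like `T + lq` on `[-lq, m - lq]`, equals `m`
on `[m - lq, l0 - m]` and decays like `l0 - T` on `[l0 - m, l0]`. Splitting `[-Tc, Tc]` at these
breakpoints, each flat piece contributes its length divided by `1 + u · level`, and each sloped
piece contributes `∫₀ᵐ dx / (1 + u x / l0) = (l0 / u) log (1 + u m / l0)`. The plateau has length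
`l0 + lq - 2m = |l0 - lq|`.
-/

open intervalIntegral

theorem integral_one_div_one_add_mul {c d : ℝ} (hc : 0 < c) (hd : 0 ≤ d) :
    ∫ x in (0 : ℝ)..d, 1 / (1 + c * x) = Real.log (1 + c * d) / c := by
  have h := integral_comp_mul_add (fun x : ℝ => 1 / x) hc.ne' 1 (a := 0) (b := d)
  simp only [mul_zero, smul_eq_mul, add_comm _ (1 : ℝ), add_zero] at h
  rw [h, integral_one_div_of_pos one_pos (by positivity), div_one]
  ring

section Overlap

variable {l0 lq : ℝ}

theorem overlap_eq (l0 lq T : ℝ) :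
    overlap l0 lq T = max (min (T + lq) l0 - max T 0) 0 / l0 := by
  rw [overlap, Icc_inter_Icc, Real.volume_Icc, ENNReal.toReal_ofReal']

theorem overlap_nonneg (hl0 : 0 ≤ l0) (T : ℝ) : 0 ≤ overlap l0 lq T := by
  rw [overlap_eq]; positivity

theorem continuous_overlap (l0 lq : ℝ) : Continuous (overlap l0 lq) := by
  simp only [funext (overlap_eq l0 lq)]; fun_prop

theorem overlap_eq_zero_of_le_neg {T : ℝ} (hT : T ≤ -lq) : overlap l0 lq T = 0 := by
  rw [overlap_eq, max_eq_right, zero_div]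
  linarith [min_le_left (T + lq) l0, le_max_right T 0]

theorem overlap_eq_zero_of_ge {T : ℝ} (hT : l0 ≤ T) : overlap l0 lq T = 0 := by
  rw [overlap_eq, max_eq_right, zero_div]
  linarith [min_le_right (T + lq) l0, le_max_left T 0]

theorem overlap_eq_add_div {T : ℝ} (h₁ : -lq ≤ T) (h₂ : T ≤ min lq l0 - lq) :
    overlap l0 lq T = (T + lq) / l0 := by
  have hm : min lq l0 ≤ lq := min_le_left _ _
  rw [overlap_eq, min_eq_left (by linarith [min_le_right lq l0]),
    max_eq_right (show T ≤ 0 by linarith), sub_zero, max_eq_left (by linarith)]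

theorem overlap_eq_sub_div {T : ℝ} (h₁ : l0 - min lq l0 ≤ T) (h₂ : T ≤ l0) :
    overlap l0 lq T = (l0 - T) / l0 := by
  have hm : min lq l0 ≤ l0 := min_le_right _ _
  rw [overlap_eq, min_eq_right (by linarith [min_le_left lq l0]),
    max_eq_left (show 0 ≤ T by linarith), max_eq_left (by linarith)]

theorem overlap_eq_min_div (hl0 : 0 ≤ l0) (hlq : 0 ≤ lq) {T : ℝ}
    (h₁ : min lq l0 - lq ≤ T) (h₂ : T ≤ l0 - min lq l0) :
    overlap l0 lq T = min lq l0 / l0 := by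
  rw [overlap_eq]
  rcases le_total lq l0 with h | h
  · rw [min_eq_left h] at h₁ h₂ ⊢
    rw [min_eq_left (by linarith), max_eq_left (show 0 ≤ T by linarith), add_sub_cancel_left,
      max_eq_left hlq]
  · rw [min_eq_right h] at h₁ h₂ ⊢
    rw [min_eq_right (by linarith), max_eq_right (show T ≤ 0 by linarith), sub_zero,
      max_eq_left hl0]

end Overlap

section Integrals

variable {l0 lq u : ℝ}

theorem continuous_one_div_one_add_mul_overlap (hl0 : 0 ≤ l0) (hu : 0 ≤ u) :
    Continuous fun t => 1 / (1 + u * overlap l0 lq t) :=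
  continuous_const.div (continuous_const.add (continuous_const.mul (continuous_overlap l0 lq)))
    fun t => by nlinarith [overlap_nonneg (lq := lq) hl0 t]

theorem integral_of_overlap_eq_const {a b k : ℝ} (hab : a ≤ b)
    (hk : ∀ t ∈ Icc a b, overlap l0 lq t = k) :
    ∫ t in a..b, 1 / (1 + u * overlap l0 lq t) = (b - a) / (1 + u * k) := by
  rw [integral_congr (g := fun _ => 1 / (1 + u * k)) fun t ht => by
      rw [uIcc_of_le hab] at ht; simp only [hk t ht],
    intervalIntegral.integral_const, smul_eq_mul, mul_one_div]

theorem integral_of_overlap_eq_add_div (hl0 : 0 < l0) (hlq : 0 ≤ lq) (hu : 0 < u) :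
    ∫ t in -lq..min lq l0 - lq, 1 / (1 + u * overlap l0 lq t) =
      l0 / u * Real.log (1 + u * min lq l0 / l0) := by
  have hm : 0 ≤ min lq l0 := le_min hlq hl0.le
  rw [integral_congr (g := fun t => 1 / (1 + u / l0 * (t + lq))) fun t ht => by
      rw [uIcc_of_le (by linarith)] at ht
      simp only [overlap_eq_add_div ht.1 ht.2]; ring,
    integral_comp_add_right (fun x => 1 / (1 + u / l0 * x)), neg_add_cancel, sub_add_cancel,
    integral_one_div_one_add_mul (by positivity) hm]
  field_simp

theorem integral_of_overlap_eq_sub_div (hl0 : 0 < l0) (hlq : 0 ≤ lq) (hu : 0 < u) :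
    ∫ t in l0 - min lq l0..l0, 1 / (1 + u * overlap l0 lq t) =
      l0 / u * Real.log (1 + u * min lq l0 / l0) := by
  have hm : 0 ≤ min lq l0 := le_min hlq hl0.le
  rw [integral_congr (g := fun t => 1 / (1 + u / l0 * (l0 - t))) fun t ht => by
      rw [uIcc_of_le (by linarith)] at ht
      simp only [overlap_eq_sub_div ht.1 ht.2]; ring,
    integral_comp_sub_left (fun x => 1 / (1 + u / l0 * x)), sub_self, sub_sub_cancel,
    integral_one_div_one_add_mul (by positivity) hm]
  field_simp

end Integrals

theorem stmt_5 (l0 lq Tc u : ℝ) (hl0 : 0 < l0) (hlq : 0 < lq)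
    (hTc : max lq l0 ≤ Tc) (hu : 0 < u) :
    (1 / (2 * Tc)) * ∫ t in Icc (-Tc) Tc, 1 / (1 + u * overlap l0 lq t) =
      1 - (l0 + lq) / (2 * Tc)
        + (l0 / (Tc * u)) * Real.log (1 + u * min lq l0 / l0)
        + |l0 - lq| / (2 * Tc * (1 + u * min lq l0 / l0)) := by
  obtain ⟨hlqT, hl0T⟩ := max_le_iff.mp hTc
  have habs : |l0 - lq| = l0 + lq - 2 * min lq l0 := by
    rw [← max_sub_min_eq_abs]; linarith [min_add_max lq l0]
  set m := min lq l0
  have hm : 0 < m := lt_min hlq hl0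
  have hmlq : m ≤ lq := min_le_left _ _
  have hml0 : m ≤ l0 := min_le_right _ _
  have hint : ∀ a b : ℝ, IntervalIntegrable (fun t => 1 / (1 + u * overlap l0 lq t)) volume a b :=
    fun a b => (continuous_one_div_one_add_mul_overlap hl0.le hu.le).intervalIntegrable a b
  rw [integral_Icc_eq_integral_Ioc, ← integral_of_le (by linarith),
    ← integral_add_adjacent_intervals (hint (-Tc) (-lq)) (hint _ Tc),
    ← integral_add_adjacent_intervals (hint (-lq) (m - lq)) (hint _ Tc),
    ← integral_add_adjacent_intervals (hint (m - lq) (l0 - m)) (hint _ Tc),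
    ← integral_add_adjacent_intervals (hint (l0 - m) l0) (hint _ Tc),
    integral_of_overlap_eq_const (by linarith) fun t ht => overlap_eq_zero_of_le_neg ht.2,
    integral_of_overlap_eq_add_div hl0 hlq.le hu,
    integral_of_overlap_eq_const (by linarith) fun t ht =>
      overlap_eq_min_div hl0.le hlq.le ht.1 ht.2,
    integral_of_overlap_eq_sub_div hl0 hlq.le hu,
    integral_of_overlap_eq_const (by linarith) fun t ht => overlap_eq_zero_of_ge ht.1, habs]
  have hTc0 : 0 < Tc := by linarith
  field_simp
  ring
end

section
/- Let η > 2, l_{q0}, l_q > 0, T_c ≥ max(l_q, l_{q0}), and let h(t) be the normalized overlap function. Then ∫_{−T_c}^{T_c} h(t)^{2/η} dt = (2η/(η+2)) · l_{q0} · (min(1, l_q/l_{q0}))^{(η+2)/η} + (min(1, l_q/l_{q0}))^{2/η} · |l_{q0} − l_q|. -/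
open MeasureTheory Set

/-!
As a function of the start time `t`, the length of `[t, t + lq] ∩ [0, l0]` is a trapezoid:
it vanishes outside `[-lq, l0]`, rises with slope one to `m = min lq l0`, stays at `m` on a
plateau of length `|l0 - lq|`, and falls back with slope one. Hence for every continuous `F`
with `F 0 = 0` the integral of `F` of the overlap is `2 ∫₀ᵐ F + |l0 - lq| F m`, and for
`F s = (s / l0) ^ (2 / η)` the ramp integral is elementary.
-/

open intervalIntegral

def overlapLength (l0 lq t : ℝ) : ℝ := max (min (t + lq) l0 - max t 0) 0

theorem overlap_eq_overlapLength_div (l0 lq t : ℝ) :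
    overlap l0 lq t = overlapLength l0 lq t / l0 := by
  rw [overlap, Icc_inter_Icc, Real.volume_Icc, ENNReal.toReal_ofReal', overlapLength]

theorem continuous_overlapLength (l0 lq : ℝ) : Continuous (overlapLength l0 lq) := by
  unfold overlapLength
  fun_prop

section overlapLength

variable {l0 lq t : ℝ}

theorem overlapLength_of_le_neg (ht : t ≤ -lq) : overlapLength l0 lq t = 0 :=
  max_eq_right <| by linarith [min_le_left (t + lq) l0, le_max_right t 0]

theorem overlapLength_of_ge (ht : l0 ≤ t) : overlapLength l0 lq t = 0 :=
  max_eq_right <| by linarith [min_le_right (t + lq) l0, le_max_left t 0]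

theorem overlapLength_of_mem_rising (ht : t ∈ Icc (-lq) (min lq l0 - lq)) :
    overlapLength l0 lq t = t + lq := by
  obtain ⟨h₁, h₂⟩ := ht
  have : min lq l0 ≤ lq := min_le_left _ _
  have : min lq l0 ≤ l0 := min_le_right _ _
  rw [overlapLength, max_eq_right (by linarith : t ≤ 0),
    min_eq_left (by linarith : t + lq ≤ l0), max_eq_left] <;> linarith

theorem overlapLength_of_mem_falling (ht : t ∈ Icc (l0 - min lq l0) l0) :
    overlapLength l0 lq t = l0 - t := by
  obtain ⟨h₁, h₂⟩ := ht
  have : min lq l0 ≤ lq := min_le_left _ _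
  have : min lq l0 ≤ l0 := min_le_right _ _
  rw [overlapLength, max_eq_left (by linarith : 0 ≤ t),
    min_eq_right (by linarith : l0 ≤ t + lq), max_eq_left]
  linarith

theorem overlapLength_of_mem_plateau (hl0 : 0 ≤ l0) (hlq : 0 ≤ lq)
    (ht : t ∈ Icc (min lq l0 - lq) (l0 - min lq l0)) :
    overlapLength l0 lq t = min lq l0 := by
  obtain ⟨h₁, h₂⟩ := ht
  rcases le_total lq l0 with h | h
  · rw [min_eq_left h] at h₁ h₂ ⊢
    rw [overlapLength, max_eq_left (by linarith : 0 ≤ t),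
      min_eq_left (by linarith : t + lq ≤ l0), max_eq_left] <;> linarith
  · rw [min_eq_right h] at h₁ h₂ ⊢
    rw [overlapLength, max_eq_right (by linarith : t ≤ 0),
      min_eq_right (by linarith : l0 ≤ t + lq), max_eq_left] <;> linarith

end overlapLength

theorem integral_comp_overlapLength {F : ℝ → ℝ} (hF : Continuous F) (hF0 : F 0 = 0)
    {l0 lq T : ℝ} (hl0 : 0 ≤ l0) (hlq : 0 ≤ lq) (hl0T : l0 ≤ T) (hlqT : lq ≤ T) :
    ∫ t in (-T)..T, F (overlapLength l0 lq t) =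
      2 * (∫ s in (0)..min lq l0, F s) + |l0 - lq| * F (min lq l0) := by
  set m := min lq l0
  have hm : 0 ≤ m := le_min hlq hl0
  have hint : ∀ a b, IntervalIntegrable (fun t => F (overlapLength l0 lq t)) volume a b :=
    fun a b => (hF.comp (continuous_overlapLength l0 lq)).intervalIntegrable a b
  have congr_on {a b : ℝ} (hab : a ≤ b) {g : ℝ → ℝ}
      (hg : ∀ t ∈ Icc a b, F (overlapLength l0 lq t) = g t) :
      ∫ t in a..b, F (overlapLength l0 lq t) = ∫ t in a..b, g t :=
    integral_congr fun t ht => hg t (uIcc_of_le hab ▸ ht)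
  rw [← integral_add_adjacent_intervals (hint (-T) (-lq)) (hint _ T),
    ← integral_add_adjacent_intervals (hint (-lq) (m - lq)) (hint _ T),
    ← integral_add_adjacent_intervals (hint (m - lq) (l0 - m)) (hint _ T),
    ← integral_add_adjacent_intervals (hint (l0 - m) l0) (hint l0 T)]
  have hleft : ∫ t in (-T)..(-lq), F (overlapLength l0 lq t) = 0 := by
    rw [congr_on (by linarith) (g := fun _ => 0) fun t ht => by
      rw [overlapLength_of_le_neg ht.2, hF0]]
    simp
  have hrising : ∫ t in (-lq)..(m - lq), F (overlapLength l0 lq t) = ∫ s in (0)..m, F s := by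
    rw [congr_on (by linarith) (g := fun t => F (t + lq)) fun t ht => by
      rw [overlapLength_of_mem_rising ht], integral_comp_add_right]
    simp
  have hplateau :
      ∫ t in (m - lq)..(l0 - m), F (overlapLength l0 lq t) = |l0 - lq| * F m := by
    have hlen : l0 - m - (m - lq) = |l0 - lq| := by
      rcases le_total lq l0 with h | h
      · rw [abs_of_nonneg (by linarith), show m = lq from min_eq_left h]; ring
      · rw [abs_of_nonpos (by linarith), show m = l0 from min_eq_right h]; ring
    rw [congr_on (by linarith [min_le_left lq l0, min_le_right lq l0]) (g := fun _ => F m)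
      fun t ht => by rw [overlapLength_of_mem_plateau hl0 hlq ht],
      intervalIntegral.integral_const, smul_eq_mul, hlen]
  have hfalling : ∫ t in (l0 - m)..l0, F (overlapLength l0 lq t) = ∫ s in (0)..m, F s := by
    rw [congr_on (by linarith) (g := fun t => F (l0 - t)) fun t ht => by
      rw [overlapLength_of_mem_falling ht], integral_comp_sub_left]
    simp
  have hright : ∫ t in l0..T, F (overlapLength l0 lq t) = 0 := by
    rw [congr_on hl0T (g := fun _ => 0) fun t ht => by
      rw [overlapLength_of_ge ht.1, hF0]]
    simp
  rw [hleft, hrising, hplateau, hfalling, hright]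
  ring

theorem integral_div_rpow {a l m : ℝ} (ha : -1 < a) (hl : 0 ≤ l) (hm : 0 ≤ m) :
    ∫ s in (0)..m, (s / l) ^ a = m ^ (a + 1) / ((a + 1) * l ^ a) := by
  rw [integral_congr (g := fun s => s ^ a / l ^ a) fun s hs =>
      Real.div_rpow (uIcc_of_le hm ▸ hs).1 hl a,
    intervalIntegral.integral_div, integral_rpow (Or.inl ha),
    Real.zero_rpow (by linarith), sub_zero, div_div]

theorem min_one_div_eq_min_div {x y : ℝ} (hy : 0 < y) : min 1 (x / y) = min x y / y := by
  rw [← min_div_div_right hy.le, div_self hy.ne', min_comm]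

theorem stmt_10 (η l0 lq Tc : ℝ) (hη : 2 < η) (hl0 : 0 < l0) (hlq : 0 < lq)
    (hTc : max lq l0 ≤ Tc) :
    ∫ t in Icc (-Tc) Tc, overlap l0 lq t ^ (2 / η) =
      (2 * η / (η + 2)) * l0 * (min 1 (lq / l0)) ^ ((η + 2) / η)
        + (min 1 (lq / l0)) ^ (2 / η) * |l0 - lq| := by
  have ha : 0 < 2 / η := by positivity
  have hm : 0 < min lq l0 := lt_min hlq hl0
  have hlqT : lq ≤ Tc := (le_max_left _ _).trans hTc
  have hl0T : l0 ≤ Tc := (le_max_right _ _).trans hTc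
  have hF : Continuous fun s : ℝ => (s / l0) ^ (2 / η) :=
    (continuous_id.div_const _).rpow_const fun _ => Or.inr ha.le
  simp only [overlap_eq_overlapLength_div]
  rw [integral_Icc_eq_integral_Ioc, ← intervalIntegral.integral_of_le (by linarith),
    integral_comp_overlapLength hF (by simp [Real.zero_rpow ha.ne']) hl0.le hlq.le hl0T hlqT,
    integral_div_rpow (by linarith) hl0.le hm.le, min_one_div_eq_min_div hl0,
    show (η + 2) / η = 2 / η + 1 by field_simp; ring, Real.rpow_add_one hm.ne',
    Real.rpow_add_one (div_pos hm hl0).ne', Real.div_rpow hm.le hl0.le]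
  field_simp
  ring
end

section
/- For η > 2, b > 0 and 0 ≤ d_{q−1} < d_q, the intra-cluster integral ∫_{d_{q−1}}^{d_q} (b r^{−η}/(1 + b r^{−η})) r dr is finite and bounded above by min( (d_q² − d_{q−1}²)/2, b^{2/η} π/(η sin(2π/η)) ). -/
/-!
The integrand is at most `r`, which gives the first bound. It is nonnegative, so the integral over
`[d₀, d₁]` is at most the integral over `(0, ∞)`. The substitutions `r = x ^ (1/η)` and `x = b t`
turn the latter into `(b ^ (2/η) / η) ∫₀^∞ t ^ (a-1) / (1 + t) dt` with `a = 2/η ∈ (0, 1)`, and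
`t ↦ t / (1 + t)` maps this onto the Beta integral `B(a, 1 - a) = Γ(a) Γ(1 - a) = π / sin (π a)`.
-/

open MeasureTheory Set Real

section Beta

open ProbabilityTheory

variable {u v : ℝ}

lemma betaPDF_integrand_nonneg (hu : 0 < u) (hv : 0 < v) :
    0 ≤ᵐ[volume.restrict (Ioo (0 : ℝ) 1)]
      fun x => 1 / beta u v * x ^ (u - 1) * (1 - x) ^ (v - 1) := by
  filter_upwards [ae_restrict_mem measurableSet_Ioo] with x hx
  have := beta_pos hu hv
  have := rpow_pos_of_pos hx.1 (u - 1)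
  have := rpow_pos_of_pos (sub_pos.2 hx.2) (v - 1)
  positivity

lemma integrableOn_betaPDF_integrand (hu : 0 < u) (hv : 0 < v) :
    IntegrableOn (fun x => 1 / beta u v * x ^ (u - 1) * (1 - x) ^ (v - 1)) (Ioo (0 : ℝ) 1) := by
  refine (lintegral_ofReal_ne_top_iff_integrable (by fun_prop)
    (betaPDF_integrand_nonneg hu hv)).1 ?_
  rw [← lintegral_betaPDF, lintegral_betaPDF_eq_one hu hv]
  exact ENNReal.one_ne_top

lemma integrableOn_rpow_mul_one_sub_rpow (hu : 0 < u) (hv : 0 < v) :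
    IntegrableOn (fun x => x ^ (u - 1) * (1 - x) ^ (v - 1)) (Ioo (0 : ℝ) 1) := by
  refine IntegrableOn.congr_fun ((integrableOn_betaPDF_integrand hu hv).const_mul (beta u v))
    (fun x _ => ?_) measurableSet_Ioo
  field_simp [(beta_pos hu hv).ne']

lemma integral_rpow_mul_one_sub_rpow (hu : 0 < u) (hv : 0 < v) :
    ∫ x in Ioo (0 : ℝ) 1, x ^ (u - 1) * (1 - x) ^ (v - 1) = Gamma u * Gamma v / Gamma (u + v) := by
  have h := lintegral_betaPDF_eq_one hu hv
  rw [lintegral_betaPDF, ← ofReal_integral_eq_lintegral_ofReal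
    (integrableOn_betaPDF_integrand hu hv) (betaPDF_integrand_nonneg hu hv),
    ENNReal.ofReal_eq_one] at h
  simp_rw [mul_assoc, integral_const_mul] at h
  field_simp [(beta_pos hu hv).ne'] at h
  exact h

end Beta

section BetaSecondKind

lemma image_div_one_add_Ioi : (fun t : ℝ => t / (1 + t)) '' Ioi 0 = Ioo 0 1 := by
  ext x
  constructor
  · rintro ⟨t, ht : 0 < t, rfl⟩
    exact ⟨by positivity, (div_lt_one (by positivity)).2 (by linarith)⟩
  · rintro ⟨hx0, hx1⟩
    refine ⟨x / (1 - x), div_pos hx0 (sub_pos.2 hx1), ?_⟩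
    have : 1 - x ≠ 0 := (sub_pos.2 hx1).ne'
    field_simp
    ring

lemma injOn_div_one_add_Ioi : InjOn (fun t : ℝ => t / (1 + t)) (Ioi 0) := by
  intro s (hs : 0 < s) t (ht : 0 < t) h
  field_simp at h
  linarith

lemma hasDerivAt_div_one_add {t : ℝ} (ht : 1 + t ≠ 0) :
    HasDerivAt (fun t : ℝ => t / (1 + t)) ((1 + t) ^ 2)⁻¹ t := by
  have h := (hasDerivAt_id' t).div ((hasDerivAt_id' t).const_add 1) ht
  rwa [show (1 * (1 + t) - t * 1) / (1 + t) ^ 2 = ((1 + t) ^ 2)⁻¹ by ring] at h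

lemma rpow_mul_one_sub_rpow_div_one_add {u v t : ℝ} (ht : 0 < t) :
    ((1 + t) ^ 2)⁻¹ * ((t / (1 + t)) ^ (u - 1) * (1 - t / (1 + t)) ^ (v - 1)) =
      t ^ (u - 1) / (1 + t) ^ (u + v) := by
  have ht1 : 0 < 1 + t := by positivity
  have hsub : 1 - t / (1 + t) = (1 + t)⁻¹ := by field_simp; ring
  rw [hsub, div_rpow ht.le ht1.le, inv_rpow ht1.le, ← rpow_natCast, div_eq_mul_inv,
    div_eq_mul_inv, ← rpow_neg ht1.le, ← rpow_neg ht1.le, ← rpow_neg ht1.le, ← rpow_neg ht1.le,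
    show -(u + v) = -((2 : ℕ) : ℝ) + -(u - 1) + -(v - 1) by push_cast; ring,
    rpow_add ht1, rpow_add ht1]
  ring

variable {u v : ℝ}

lemma abs_deriv_smul_beta_integrand_comp_div_one_add :
    EqOn (fun t : ℝ => |((1 + t) ^ 2)⁻¹| • ((t / (1 + t)) ^ (u - 1) * (1 - t / (1 + t)) ^ (v - 1)))
      (fun t => t ^ (u - 1) / (1 + t) ^ (u + v)) (Ioi 0) := by
  intro t (ht : 0 < t)
  simp only [smul_eq_mul]
  rw [abs_of_pos (by positivity), rpow_mul_one_sub_rpow_div_one_add ht]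

lemma integrableOn_rpow_div_one_add_rpow (hu : 0 < u) (hv : 0 < v) :
    IntegrableOn (fun t : ℝ => t ^ (u - 1) / (1 + t) ^ (u + v)) (Ioi 0) := by
  have h := integrableOn_image_iff_integrableOn_abs_deriv_smul measurableSet_Ioi
    (fun t (ht : 0 < t) => (hasDerivAt_div_one_add (by positivity)).hasDerivWithinAt)
    injOn_div_one_add_Ioi (fun x => x ^ (u - 1) * (1 - x) ^ (v - 1))
  rw [image_div_one_add_Ioi] at h
  exact (h.1 (integrableOn_rpow_mul_one_sub_rpow hu hv)).congr_fun
    abs_deriv_smul_beta_integrand_comp_div_one_add measurableSet_Ioi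

lemma integral_rpow_div_one_add_rpow (hu : 0 < u) (hv : 0 < v) :
    ∫ t in Ioi (0 : ℝ), t ^ (u - 1) / (1 + t) ^ (u + v) = Gamma u * Gamma v / Gamma (u + v) := by
  rw [← integral_rpow_mul_one_sub_rpow hu hv, ← image_div_one_add_Ioi,
    integral_image_eq_integral_abs_deriv_smul measurableSet_Ioi
      (fun t (ht : 0 < t) => (hasDerivAt_div_one_add (by positivity)).hasDerivWithinAt)
      injOn_div_one_add_Ioi]
  exact (setIntegral_congr_fun measurableSet_Ioi
    abs_deriv_smul_beta_integrand_comp_div_one_add).symm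

end BetaSecondKind

section Reflection

variable {a : ℝ}

lemma integrableOn_rpow_div_one_add (ha0 : 0 < a) (ha1 : a < 1) :
    IntegrableOn (fun t : ℝ => t ^ (a - 1) / (1 + t)) (Ioi 0) := by
  simpa using integrableOn_rpow_div_one_add_rpow ha0 (sub_pos.2 ha1)

lemma integral_rpow_div_one_add (ha0 : 0 < a) (ha1 : a < 1) :
    ∫ t in Ioi (0 : ℝ), t ^ (a - 1) / (1 + t) = π / sin (π * a) := by
  simpa [Gamma_mul_Gamma_one_sub] using integral_rpow_div_one_add_rpow ha0 (sub_pos.2 ha1)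

lemma rpow_div_add_comp_mul_left {c : ℝ} (hc : 0 < c) :
    EqOn (fun t : ℝ => (c * t) ^ (a - 1) / (c + c * t))
      (fun t => c ^ (a - 2) * (t ^ (a - 1) / (1 + t))) (Ioi 0) := by
  intro t (ht : 0 < t)
  dsimp only
  rw [mul_rpow hc.le ht.le, show a - 1 = a - 2 + 1 by ring, rpow_add hc, rpow_one,
    show a - 2 + 1 = a - 1 by ring]
  field_simp

lemma integrableOn_rpow_div_add (ha0 : 0 < a) (ha1 : a < 1) {c : ℝ} (hc : 0 < c) :
    IntegrableOn (fun x : ℝ => x ^ (a - 1) / (c + x)) (Ioi 0) := by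
  rw [← mul_zero c, ← integrableOn_Ioi_comp_mul_left_iff _ _ hc]
  exact IntegrableOn.congr_fun ((integrableOn_rpow_div_one_add ha0 ha1).const_mul _)
    (rpow_div_add_comp_mul_left hc).symm measurableSet_Ioi

lemma integral_rpow_div_add (ha0 : 0 < a) (ha1 : a < 1) {c : ℝ} (hc : 0 < c) :
    ∫ x in Ioi (0 : ℝ), x ^ (a - 1) / (c + x) = c ^ (a - 1) * (π / sin (π * a)) := by
  rw [← mul_zero c, ← integral_comp_mul_left_Ioi' _ _ hc,
    setIntegral_congr_fun measurableSet_Ioi (rpow_div_add_comp_mul_left hc),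
    integral_const_mul, integral_rpow_div_one_add ha0 ha1, smul_eq_mul,
    show a - 2 = a - 1 - 1 by ring, rpow_sub_one hc.ne']
  field_simp

end Reflection

noncomputable def intraClusterIntegrand (η b r : ℝ) : ℝ :=
  b * r ^ (-η) / (1 + b * r ^ (-η)) * r

section IntraCluster

variable {η b r : ℝ}

lemma intraClusterIntegrand_nonneg (hb : 0 ≤ b) (hr : 0 ≤ r) :
    0 ≤ intraClusterIntegrand η b r := by
  have := rpow_nonneg hr (-η)
  unfold intraClusterIntegrand
  positivity

lemma intraClusterIntegrand_le_self (hb : 0 ≤ b) (hr : 0 ≤ r) :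
    intraClusterIntegrand η b r ≤ r := by
  have := rpow_nonneg hr (-η)
  exact mul_le_of_le_one_left hr ((div_le_one (by positivity)).2 (by linarith))

lemma intraClusterIntegrand_comp_rpow_inv (hη : 0 < η) :
    EqOn (fun x : ℝ => (|1 / η| * x ^ (1 / η - 1)) • intraClusterIntegrand η b (x ^ (1 / η)))
      (fun x => b / η * (x ^ (2 / η - 1) / (b + x))) (Ioi 0) := by
  intro x (hx : 0 < x)
  simp only [smul_eq_mul, intraClusterIntegrand]
  rw [abs_of_pos (by positivity), ← rpow_mul hx.le, show 1 / η * -η = -1 by field_simp,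
    rpow_neg_one, show 2 / η - 1 = 1 / η - 1 + 1 / η by ring, rpow_add hx]
  field_simp
  ring

lemma integrableOn_intraClusterIntegrand (hη : 2 < η) (hb : 0 < b) :
    IntegrableOn (intraClusterIntegrand η b) (Ioi 0) := by
  have hη0 : 0 < η := by linarith
  rw [← integrableOn_Ioi_comp_rpow_iff _ (one_div_pos.2 hη0).ne']
  exact IntegrableOn.congr_fun ((integrableOn_rpow_div_add (by positivity)
    ((div_lt_one hη0).2 hη) hb).const_mul _)
    (intraClusterIntegrand_comp_rpow_inv hη0).symm measurableSet_Ioi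

lemma integral_intraClusterIntegrand (hη : 2 < η) (hb : 0 < b) :
    ∫ r in Ioi (0 : ℝ), intraClusterIntegrand η b r =
      b ^ (2 / η) * π / (η * sin (2 * π / η)) := by
  have hη0 : 0 < η := by linarith
  rw [← integral_comp_rpow_Ioi _ (one_div_pos.2 hη0).ne',
    setIntegral_congr_fun measurableSet_Ioi (intraClusterIntegrand_comp_rpow_inv hη0),
    integral_const_mul, integral_rpow_div_add (by positivity) ((div_lt_one hη0).2 hη) hb,
    rpow_sub_one hb.ne', show π * (2 / η) = 2 * π / η by ring]
  field_simp

end IntraCluster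

theorem stmt_18 (η b d0 d1 : ℝ) (hη : 2 < η) (hb : 0 < b) (hd0 : 0 ≤ d0) (hd : d0 < d1) :
    IntervalIntegrable (fun r => b * r ^ (-η) / (1 + b * r ^ (-η)) * r) volume d0 d1 ∧
    ∫ r in d0..d1, b * r ^ (-η) / (1 + b * r ^ (-η)) * r ≤
      min ((d1 ^ 2 - d0 ^ 2) / 2) (b ^ (2 / η) * π / (η * Real.sin (2 * π / η))) := by
  change IntervalIntegrable (intraClusterIntegrand η b) volume d0 d1 ∧
    ∫ r in d0..d1, intraClusterIntegrand η b r ≤ _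
  have hsub : Ioc d0 d1 ⊆ Ioi 0 := fun r hr => hd0.trans_lt hr.1
  have hint := integrableOn_intraClusterIntegrand hη hb
  have hint_d : IntervalIntegrable (intraClusterIntegrand η b) volume d0 d1 :=
    (intervalIntegrable_iff_integrableOn_Ioc_of_le hd.le).2 (hint.mono_set hsub)
  refine ⟨hint_d, le_min ?_ ?_⟩
  · calc ∫ r in d0..d1, intraClusterIntegrand η b r
        ≤ ∫ r in d0..d1, r :=
          intervalIntegral.integral_mono_on hd.le hint_d intervalIntegral.intervalIntegrable_id
            fun r hr => intraClusterIntegrand_le_self hb.le (hd0.trans hr.1)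
      _ = (d1 ^ 2 - d0 ^ 2) / 2 := integral_id
  · rw [intervalIntegral.integral_of_le hd.le, ← integral_intraClusterIntegrand hη hb]
    refine setIntegral_mono_set hint ?_ hsub.eventuallyLE
    filter_upwards [ae_restrict_mem measurableSet_Ioi] with r (hr : 0 < r)
    exact intraClusterIntegrand_nonneg hb.le hr.le
end
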